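/- arXiv:0902.2805 — 2 statements merged into one kernel-verified Lean document; each statement's English description precedes it below -/
import Mathlib

section
/- The minimum value of F satisfies 3.36093 < min_{c ∈ ℝ} F(c) < 3.36095. -/
/-!
`F` is convex, being an integral of the convex functions `c ↦ exp (-c * (x₁ + x₂))`. The closed
form, evaluated with degree-11 Taylor polynomials of `exp`, gives `F (-0.435) < F (-0.436)` and
`F (-0.435) < F (-0.4335)`, so the minimum of `F` on `[-0.436, -0.4335]` is interior, hence
global by convexity, and it is at most `F (-0.435) < 3.3609383`. On `[-0.436, ∞)` the convex `F`
lies above its secant through `-0.438` and `-0.436`, whose slope is small enough to keep that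
secant above `3.36093` on `[-0.436, -0.4335]`.
-/

open MeasureTheory Real Set

/-- The closed pentagon with vertices (-1,-1), (1,-1), (1,0), (0,1), (-1,1). -/
def P : Set (ℝ × ℝ) :=
  {p : ℝ × ℝ | -1 ≤ p.1 ∧ p.1 ≤ 1 ∧ -1 ≤ p.2 ∧ p.2 ≤ 1 ∧ p.1 + p.2 ≤ 1}

/-- `F c = ∫_P e^{-c(x₁+x₂)} dx₁ dx₂` (Lebesgue measure on ℝ²). -/
noncomputable def F (c : ℝ) : ℝ := ∫ p in P, Real.exp (-c * (p.1 + p.2))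

theorem ConvexOn.add_slope_mul_le {f : ℝ → ℝ} {s : Set ℝ} (hf : ConvexOn ℝ s f) {a b x : ℝ}
    (ha : a ∈ s) (hx : x ∈ s) (hab : a < b) (hbx : b ≤ x) :
    f b + slope f a b * (x - b) ≤ f x := by
  rcases hbx.eq_or_lt with rfl | hbx
  · simp
  rw [slope_def_field, ← le_sub_iff_add_le', ← le_div_iff₀ (sub_pos.2 hbx)]
  exact hf.slope_mono_adjacent ha hx hab hbx

theorem ConvexOn.exists_mem_Icc_forall_le {f : ℝ → ℝ} (hf : ConvexOn ℝ univ f) {b m c : ℝ}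
    (hbm : b ≤ m) (hmc : m ≤ c) (hb : f m < f b) (hc : f m < f c) :
    ∃ x ∈ Icc b c, ∀ y, f x ≤ f y := by
  obtain ⟨x, hx, hmin⟩ := isCompact_Icc.exists_isMinOn (nonempty_Icc.2 (hbm.trans hmc))
    ((hf.continuousOn isOpen_univ).mono (subset_univ _))
  have hxm : f x ≤ f m := hmin ⟨hbm, hmc⟩
  have hbx : b < x := hx.1.lt_of_ne (by rintro rfl; linarith)
  have hxc : x < c := hx.2.lt_of_ne (by rintro rfl; linarith)
  exact ⟨x, hx, IsMinOn.of_isLocalMin_of_convex_univ (hmin.isLocalMin (Icc_mem_nhds hbx hxc)) hf⟩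

theorem convexOn_integral {α E : Type*} [MeasurableSpace α] {μ : Measure α} [AddCommGroup E]
    [Module ℝ E] {s : Set E} {g : E → α → ℝ} (hs : Convex ℝ s)
    (hg : ∀ᵐ p ∂μ, ConvexOn ℝ s (g · p)) (hint : ∀ x ∈ s, Integrable (g x) μ) :
    ConvexOn ℝ s (fun x ↦ ∫ p, g x p ∂μ) := by
  refine ⟨hs, fun x hx y hy a b ha hb hab ↦ ?_⟩
  calc ∫ p, g (a • x + b • y) p ∂μ ≤ ∫ p, (a * g x p + b * g y p) ∂μ := by
        refine integral_mono_ae (hint _ (hs hx hy ha hb hab))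
          (((hint x hx).const_mul a).add ((hint y hy).const_mul b)) ?_
        filter_upwards [hg] with p hp
        exact hp.2 hx hy ha hb hab
    _ = a * ∫ p, g x p ∂μ + b * ∫ p, g y p ∂μ := by
        rw [integral_add ((hint x hx).const_mul a) ((hint y hy).const_mul b),
          integral_const_mul, integral_const_mul]

theorem integral_exp_neg_mul {c : ℝ} (hc : c ≠ 0) (a b : ℝ) :
    ∫ x in a..b, exp (-c * x) = (exp (-c * a) - exp (-c * b)) / c := by
  rw [intervalIntegral.integral_comp_mul_left (fun x ↦ exp x) (neg_ne_zero.2 hc), integral_exp,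
    smul_eq_mul]
  field_simp
  ring

theorem setIntegral_prod_fiber {α β : Type*} [MeasurableSpace α] [MeasurableSpace β]
    {μ : Measure α} {ν : Measure β} [SFinite μ] [SFinite ν] {f : α × β → ℝ} {s : Set α}
    {t : α → Set β} (hs : MeasurableSet s)
    (hR : MeasurableSet {p : α × β | p.1 ∈ s ∧ p.2 ∈ t p.1})
    (hf : IntegrableOn f {p | p.1 ∈ s ∧ p.2 ∈ t p.1} (μ.prod ν)) :
    ∫ p in {p : α × β | p.1 ∈ s ∧ p.2 ∈ t p.1}, f p ∂μ.prod ν =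
      ∫ x in s, ∫ y in t x, f (x, y) ∂ν ∂μ := by
  rw [← integral_indicator hR, integral_prod _ ((integrable_indicator_iff hR).2 hf),
    ← integral_indicator hs]
  congr 1
  ext x
  by_cases hx : x ∈ s
  · have hfiber : Prod.mk x ⁻¹' {p : α × β | p.1 ∈ s ∧ p.2 ∈ t p.1} = t x := by
      ext y; simp [hx]
    rw [indicator_of_mem hx, ← hfiber, ← integral_indicator (measurable_prodMk_left hR)]
    rfl
  · simp [indicator, hx]

theorem isClosed_P : IsClosed P := by
  simp only [P, ofPred_and]
  exact (isClosed_le continuous_const continuous_fst).inter <|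
    (isClosed_le continuous_fst continuous_const).inter <|
    (isClosed_le continuous_const continuous_snd).inter <|
    (isClosed_le continuous_snd continuous_const).inter <|
    isClosed_le (continuous_fst.add continuous_snd) continuous_const

theorem P_eq_setOf_mem_Icc :
    P = {p : ℝ × ℝ | p.1 ∈ Icc (-1) 1 ∧ p.2 ∈ Icc (-1) (min 1 (1 - p.1))} := by
  ext p
  simp only [P, mem_ofPred_eq, mem_Icc, le_min_iff]
  constructor
  · rintro ⟨h₁, h₂, h₃, h₄, h₅⟩
    exact ⟨⟨h₁, h₂⟩, h₃, h₄, by linarith⟩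
  · rintro ⟨⟨h₁, h₂⟩, h₃, h₄, h₅⟩
    exact ⟨h₁, h₂, h₃, h₄, by linarith⟩

theorem isCompact_P : IsCompact P :=
  (isCompact_Icc (a := ((-1 : ℝ), (-1 : ℝ))) (b := (1, 1))).of_isClosed_subset isClosed_P
    fun _ ⟨h₁, h₂, h₃, h₄, _⟩ ↦ ⟨⟨h₁, h₃⟩, h₂, h₄⟩

theorem integrableOn_P (c : ℝ) : IntegrableOn (fun p : ℝ × ℝ ↦ exp (-c * (p.1 + p.2))) P :=
  ContinuousOn.integrableOn_compact isCompact_P (by fun_prop)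

theorem F_eq_intervalIntegral (c : ℝ) (hc : c ≠ 0) :
    F c = ∫ x in (-1)..1, exp (-c * x) * ((exp c - exp (-c * min 1 (1 - x))) / c) := by
  have hinner : ∀ x ∈ Icc (-1 : ℝ) 1, ∫ y in Icc (-1) (min 1 (1 - x)), exp (-c * (x + y)) =
      exp (-c * x) * ((exp c - exp (-c * min 1 (1 - x))) / c) := by
    intro x hx
    have hle : (-1 : ℝ) ≤ min 1 (1 - x) := le_min (by norm_num) (by linarith [hx.2])
    simp only [mul_add, exp_add]
    rw [integral_const_mul, integral_Icc_eq_integral_Ioc, ← intervalIntegral.integral_of_le hle,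
      integral_exp_neg_mul hc]
    simp
  rw [F, P_eq_setOf_mem_Icc, Measure.volume_eq_prod,
    setIntegral_prod_fiber (t := fun x ↦ Icc (-1) (min 1 (1 - x))) measurableSet_Icc
      (P_eq_setOf_mem_Icc ▸ isClosed_P.measurableSet)
      (by rw [← P_eq_setOf_mem_Icc, ← Measure.volume_eq_prod]; exact integrableOn_P c),
    setIntegral_congr_fun measurableSet_Icc hinner, integral_Icc_eq_integral_Ioc,
    ← intervalIntegral.integral_of_le (by norm_num)]

theorem F_eq_of_ne_zero (c : ℝ) (hc : c ≠ 0) :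
    F c = (exp (2 * c) - 2 + (1 - c) * exp (-c)) / c ^ 2 := by
  have hleft : ∀ x ∈ uIcc (-1 : ℝ) 0,
      exp (-c * x) * ((exp c - exp (-c * min 1 (1 - x))) / c) =
      exp (-c * x) * ((exp c - exp (-c)) / c) := by
    intro x hx
    rw [uIcc_of_le (by norm_num)] at hx
    rw [min_eq_left (by linarith [hx.2]), mul_one]
  have hright : ∀ x ∈ uIcc (0 : ℝ) 1,
      exp (-c * x) * ((exp c - exp (-c * min 1 (1 - x))) / c) =
      (exp c * exp (-c * x) - exp (-c)) / c := by
    intro x hx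
    rw [uIcc_of_le (by norm_num)] at hx
    have hprod : exp (-c * x) * exp (-c * (1 - x)) = exp (-c) := by rw [← exp_add]; ring_nf
    rw [min_eq_right (by linarith [hx.1]), ← hprod]
    ring
  have hcont : Continuous fun x ↦ exp (-c * x) * ((exp c - exp (-c * min 1 (1 - x))) / c) := by
    fun_prop
  rw [F_eq_intervalIntegral c hc,
    ← intervalIntegral.integral_add_adjacent_intervals (b := 0)
      (hcont.intervalIntegrable _ _) (hcont.intervalIntegrable _ _),
    intervalIntegral.integral_congr hleft, intervalIntegral.integral_congr hright,
    intervalIntegral.integral_mul_const, intervalIntegral.integral_div,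
    intervalIntegral.integral_sub ((by fun_prop : Continuous _).intervalIntegrable _ _)
      intervalIntegrable_const,
    intervalIntegral.integral_const_mul, intervalIntegral.integral_const,
    integral_exp_neg_mul hc, integral_exp_neg_mul hc]
  have h2c : exp (2 * c) = exp c ^ 2 := by rw [← exp_nat_mul]; norm_num
  simp only [h2c, exp_neg, mul_neg, neg_neg, mul_zero, mul_one, exp_zero, smul_eq_mul]
  field_simp
  ring

theorem convexOn_F : ConvexOn ℝ univ F := by
  refine convexOn_integral convex_univ (ae_of_all _ fun p ↦ ?_) fun c _ ↦ integrableOn_P c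
  have h := convexOn_exp.comp_linearMap (LinearMap.mulLeft ℝ (-(p.1 + p.2)))
  rw [preimage_univ] at h
  refine h.congr fun c _ ↦ ?_
  simp only [Function.comp_apply, LinearMap.mulLeft_apply]
  ring_nf

noncomputable def expTaylor (n : ℕ) (x : ℝ) : ℝ := ∑ m ∈ Finset.range n, x ^ m / m.factorial

theorem abs_F_sub_expTaylor_le {n : ℕ} (hn : 0 < n) {c : ℝ} (hc : c ≠ 0)
    (hc₂ : |2 * c| ≤ 1) :
    |F c - (expTaylor n (2 * c) - 2 + (1 - c) * expTaylor n (-c)) / c ^ 2| ≤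
      (|2 * c| ^ n + |1 - c| * |c| ^ n) * (n.succ / (n.factorial * n)) / c ^ 2 := by
  have hc₁ : |-c| ≤ 1 := by
    rw [abs_mul, abs_two] at hc₂
    rw [abs_neg]
    linarith [abs_nonneg c]
  have h₂ := Real.exp_bound hc₁ hn
  have h₁ := Real.exp_bound hc₂ hn
  rw [abs_neg] at h₂
  rw [F_eq_of_ne_zero c hc, ← sub_div, abs_div, abs_of_pos (by positivity : 0 < c ^ 2)]
  gcongr
  rw [show ∀ e₁ e₂ t₁ t₂ : ℝ, e₂ - 2 + (1 - c) * e₁ - (t₂ - 2 + (1 - c) * t₁) =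
    (e₂ - t₂) + (1 - c) * (e₁ - t₁) by intros; ring, add_mul, mul_assoc]
  calc _ ≤ |exp (2 * c) - expTaylor n (2 * c)| + |1 - c| * |exp (-c) - expTaylor n (-c)| :=
        (abs_add_le _ _).trans_eq (by rw [abs_mul])
    _ ≤ _ := add_le_add h₁ (mul_le_mul_of_nonneg_left h₂ (abs_nonneg _))

theorem F_neg_0438_lt : F (-0.438) < 3.3609455 := by
  have h := abs_sub_le_iff.1 <| abs_F_sub_expTaylor_le (n := 12) (c := -0.438) (by norm_num)
    (by norm_num) (by norm_num [abs_of_neg])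
  norm_num [expTaylor, Finset.sum_range_succ, Nat.factorial, abs_of_neg] at h
  linarith [h.1]

theorem lt_F_neg_0436 : 3.3609392 < F (-0.436) := by
  have h := abs_sub_le_iff.1 <| abs_F_sub_expTaylor_le (n := 12) (c := -0.436) (by norm_num)
    (by norm_num) (by norm_num [abs_of_neg])
  norm_num [expTaylor, Finset.sum_range_succ, Nat.factorial, abs_of_neg] at h
  linarith [h.2]

theorem F_neg_0435_lt : F (-0.435) < 3.3609383 := by
  have h := abs_sub_le_iff.1 <| abs_F_sub_expTaylor_le (n := 12) (c := -0.435) (by norm_num)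
    (by norm_num) (by norm_num [abs_of_neg])
  norm_num [expTaylor, Finset.sum_range_succ, Nat.factorial, abs_of_neg] at h
  linarith [h.1]

theorem lt_F_neg_04335 : 3.3609392 < F (-0.4335) := by
  have h := abs_sub_le_iff.1 <| abs_F_sub_expTaylor_le (n := 12) (c := -0.4335) (by norm_num)
    (by norm_num) (by norm_num [abs_of_neg])
  norm_num [expTaylor, Finset.sum_range_succ, Nat.factorial, abs_of_neg] at h
  linarith [h.2]

/-- The minimum value of `F` lies strictly between `3.36093` and `3.36095`. -/
theorem stmt_5 :
    ∃ cs : ℝ, (∀ c : ℝ, F cs ≤ F c) ∧ 3.36093 < F cs ∧ F cs < 3.36095 := by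
  obtain ⟨cs, hcs, hmin⟩ := convexOn_F.exists_mem_Icc_forall_le (b := -0.436) (m := -0.435)
    (c := -0.4335) (by norm_num) (by norm_num) (by linarith [F_neg_0435_lt, lt_F_neg_0436])
    (by linarith [F_neg_0435_lt, lt_F_neg_04335])
  refine ⟨cs, hmin, ?_, (hmin (-0.435)).trans_lt (F_neg_0435_lt.trans (by norm_num))⟩
  have hslope : (3.3609392 - 3.3609455) / 0.002 ≤ slope F (-0.438) (-0.436) := by
    rw [slope_def_field, le_div_iff₀ (by norm_num)]
    linarith [F_neg_0438_lt, lt_F_neg_0436]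
  have hsecant :=
    convexOn_F.add_slope_mul_le (mem_univ (-0.438)) (mem_univ cs) (by norm_num) hcs.1
  have := mul_le_mul_of_nonneg_right hslope (sub_nonneg.2 hcs.1)
  linarith [hcs.2, lt_F_neg_0436]
end

section
/- The quantity Θ = (min_{c ∈ ℝ} H(c))/e² satisfies |Θ - 0.5179| < 5·10^{-5}; that is, the Gaussian density of the Koiso–Cao soliton equals 0.5179 to four decimal places. -/
open MeasureTheory Real Set

/-- The closed trapezium with vertices (2,-1), (-1,2), (-1,0), (0,-1). -/
def T : Set (ℝ × ℝ) :=
  {p : ℝ × ℝ | -1 ≤ p.1 ∧ -1 ≤ p.2 ∧ -1 ≤ p.1 + p.2 ∧ p.1 + p.2 ≤ 1}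

/-- `H c = ∫_T e^{-c(x₁+x₂)} dx₁ dx₂` (Lebesgue measure on ℝ²). -/
noncomputable def H (c : ℝ) : ℝ := ∫ p in T, Real.exp (-c * (p.1 + p.2))

/-!
The shear `(x₁, x₂) ↦ (x₁, x₁ + x₂)` preserves Lebesgue measure and maps `T` onto the region
`{(x, s) | -1 ≤ s ≤ 1, -1 ≤ x ≤ s + 1}`, whose slices have length `s + 2`; hence
`H c = ∫_{-1}^{1} (s + 2) e^{-cs} ds`, which integrates in closed form. By convexity of the
exponential, `H` lies above its tangent lines `H a - (b - a) M(a)`, where `M = -H'` is the first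
moment `firstMoment`. So a zero `c*` of `M`, located in `[0.52, 0.53]` by the intermediate value
theorem, is a global minimiser, and the tangent line at `0.52` bounds `H c*` from below to
within `10⁻⁴`.
-/

theorem isCompact_T : IsCompact T := by
  have hclosed : IsClosed T :=
    (isClosed_le continuous_const continuous_fst).inter <|
      (isClosed_le continuous_const continuous_snd).inter <|
        (isClosed_le continuous_const (continuous_fst.add continuous_snd)).inter
          (isClosed_le (continuous_fst.add continuous_snd) continuous_const)
  refine (isCompact_Icc (a := ((-1 : ℝ), (-1 : ℝ))) (b := (2, 2))).of_isClosed_subset hclosed ?_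
  rintro ⟨x, y⟩ ⟨hx, hy, -, hxy⟩
  exact ⟨⟨hx, hy⟩, by linarith, by linarith⟩

theorem integrableOn_T {g : ℝ × ℝ → ℝ} (hg : Continuous g) : IntegrableOn g T :=
  hg.continuousOn.integrableOn_compact isCompact_T

theorem setIntegral_T_comp_add {f : ℝ → ℝ} (hf : Continuous f) :
    ∫ p in T, f (p.1 + p.2) = ∫ s in (-1)..1, (s + 2) * f s := by
  let S : Set (ℝ × ℝ) := {q | q.2 ∈ Icc (-1) 1 ∧ q.1 ∈ Icc (-1) (q.2 + 1)}
  have hS : MeasurableSet S := by measurability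
  let e := MeasurableEquiv.shearAddRight ℝ
  have he : MeasurePreserving e (volume : Measure (ℝ × ℝ)) volume :=
    measurePreserving_prod_add volume volume
  have hT : T = e ⁻¹' S := by
    ext ⟨x, y⟩
    change (-1 ≤ x ∧ -1 ≤ y ∧ -1 ≤ x + y ∧ x + y ≤ 1) ↔
      ((-1 ≤ x + y ∧ x + y ≤ 1) ∧ -1 ≤ x ∧ x ≤ x + y + 1)
    constructor
    · rintro ⟨hx, hy, hl, hu⟩
      exact ⟨⟨hl, hu⟩, hx, by linarith⟩
    · rintro ⟨⟨hl, hu⟩, hx, hxy⟩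
      exact ⟨hx, by linarith, hl, hu⟩
  have hint : IntegrableOn (fun q : ℝ × ℝ => f q.2) S := by
    rw [← he.integrableOn_comp_preimage e.measurableEmbedding, ← hT]
    exact integrableOn_T (hf.comp (continuous_fst.add continuous_snd))
  have hslice : ∀ s, ∫ x, S.indicator (fun q => f q.2) (x, s) =
      (Icc (-1) 1).indicator (fun s => (s + 2) * f s) s := by
    intro s
    by_cases hs : s ∈ Icc (-1 : ℝ) 1
    · have hrow : ∀ x, S.indicator (fun q => f q.2) (x, s) =
          (Icc (-1) (s + 1)).indicator (fun _ => f s) x := by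
        intro x
        simp only [S, indicator_apply, mem_ofPred_eq, hs, true_and]
      simp only [hrow, integral_indicator_const _ measurableSet_Icc, indicator_of_mem hs]
      rw [Real.volume_real_Icc_of_le (by linarith [hs.1]), smul_eq_mul]
      ring
    · have hrow : ∀ x, S.indicator (fun q => f q.2) (x, s) = 0 :=
        fun x => indicator_of_notMem (fun h => hs h.1) _
      simp only [hrow, integral_zero, indicator_of_notMem hs]
  calc ∫ p in T, f (p.1 + p.2)
      = ∫ q in S, f q.2 := by
        rw [hT]; exact he.setIntegral_preimage_emb e.measurableEmbedding (fun q => f q.2) S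
    _ = ∫ s, (Icc (-1) 1).indicator (fun s => (s + 2) * f s) s := by
        rw [← integral_indicator hS, show (volume : Measure (ℝ × ℝ)) = volume.prod volume from rfl,
          integral_prod_symm _ ((integrable_indicator_iff hS).2 hint)]
        simp only [hslice]
    _ = ∫ s in (-1)..1, (s + 2) * f s := by
        rw [integral_indicator measurableSet_Icc, intervalIntegral.integral_of_le (by norm_num),
          integral_Icc_eq_integral_Ioc]

theorem integral_exp_neg_mul_sub_le {α : Type*} [MeasurableSpace α] {μ : Measure α}
    {g : α → ℝ} {a b : ℝ} (ha : Integrable (fun x => exp (-a * g x)) μ)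
    (hb : Integrable (fun x => exp (-b * g x)) μ)
    (hga : Integrable (fun x => g x * exp (-a * g x)) μ) :
    ∫ x, exp (-a * g x) ∂μ - (b - a) * ∫ x, g x * exp (-a * g x) ∂μ ≤
      ∫ x, exp (-b * g x) ∂μ := by
  rw [← integral_const_mul, ← integral_sub ha (hga.const_mul _)]
  refine integral_mono (ha.sub (hga.const_mul _)) hb fun x => ?_
  have htangent := add_one_le_exp ((a - b) * g x)
  have hsplit : exp (-b * g x) = exp (-a * g x) * exp ((a - b) * g x) := by
    rw [← exp_add]; ring_nf
  rw [hsplit]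
  nlinarith [exp_pos (-a * g x)]

noncomputable def firstMoment (c : ℝ) : ℝ := ∫ p in T, (p.1 + p.2) * exp (-c * (p.1 + p.2))

theorem continuous_firstMoment : Continuous firstMoment :=
  continuous_parametric_integral_of_continuous (by fun_prop) isCompact_T

theorem H_sub_mul_firstMoment_le (a b : ℝ) : H a - (b - a) * firstMoment a ≤ H b :=
  integral_exp_neg_mul_sub_le (g := fun p => p.1 + p.2) (integrableOn_T (by fun_prop))
    (integrableOn_T (by fun_prop)) (integrableOn_T (by fun_prop))

theorem hasDerivAt_quadratic_mul_exp (a₀ a₁ a₂ c s : ℝ) :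
    HasDerivAt (fun t => (a₀ + a₁ * t + a₂ * t ^ 2) * exp (-c * t))
      ((a₁ + 2 * a₂ * s - c * (a₀ + a₁ * s + a₂ * s ^ 2)) * exp (-c * s)) s := by
  have hP := (((hasDerivAt_id s).const_mul a₁).const_add a₀).add
    ((hasDerivAt_pow 2 s).const_mul a₂)
  have hE := ((hasDerivAt_id s).const_mul (-c)).exp
  exact (hP.mul hE).congr_deriv (by simp only [id, Pi.add_apply]; ring)

theorem H_eq_of_ne_zero {c : ℝ} (hc : c ≠ 0) :
    H c = ((c + 1) * exp c - (3 * c + 1) * exp (-c)) / c ^ 2 := by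
  have hslice := setIntegral_T_comp_add (f := fun s => exp (-c * s)) (by fun_prop)
  have hF : ∀ s ∈ uIcc (-1 : ℝ) 1,
      HasDerivAt (fun t => (-(2 * c + 1) / c ^ 2 + -1 / c * t + 0 * t ^ 2) * exp (-c * t))
        ((s + 2) * exp (-c * s)) s := fun s _ =>
    (hasDerivAt_quadratic_mul_exp _ _ _ c s).congr_deriv (by field_simp; ring)
  rw [H, hslice, intervalIntegral.integral_eq_sub_of_hasDerivAt hF
    (by apply Continuous.intervalIntegrable; fun_prop)]
  simp only [mul_one, mul_neg, neg_neg]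
  field_simp
  ring

theorem firstMoment_eq_of_ne_zero {c : ℝ} (hc : c ≠ 0) :
    firstMoment c = (-(3 * c ^ 2 + 4 * c + 2) * exp (-c) - (c ^ 2 - 2) * exp c) / c ^ 3 := by
  have hslice := setIntegral_T_comp_add (f := fun s => s * exp (-c * s)) (by fun_prop)
  have hF : ∀ s ∈ uIcc (-1 : ℝ) 1, HasDerivAt
      (fun t => (-(2 * c + 2) / c ^ 3 + -(2 * c + 2) / c ^ 2 * t + -1 / c * t ^ 2) * exp (-c * t))
      ((s + 2) * (s * exp (-c * s))) s := fun s _ =>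
    (hasDerivAt_quadratic_mul_exp _ _ _ c s).congr_deriv (by field_simp; ring)
  rw [firstMoment, hslice, intervalIntegral.integral_eq_sub_of_hasDerivAt hF
    (by apply Continuous.intervalIntegrable; fun_prop)]
  simp only [mul_one, mul_neg, neg_neg]
  field_simp
  ring

theorem abs_exp_sub_taylor_eight_le {x : ℝ} (hx : |x| ≤ 1) :
    |exp x - ∑ i ∈ Finset.range 8, x ^ i / i.factorial| ≤ |x| ^ 8 / 35840 := by
  convert Real.exp_bound hx (n := 8) (by norm_num) using 1
  norm_num [Nat.factorial, div_eq_mul_one_div (|x| ^ 8)]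

theorem zero_le_firstMoment_052 : 0 ≤ firstMoment 0.52 := by
  have h₁ := abs_le.1 (abs_exp_sub_taylor_eight_le (x := 0.52) (by norm_num [abs_le]))
  have h₂ := abs_le.1 (abs_exp_sub_taylor_eight_le (x := -0.52) (by norm_num [abs_le]))
  norm_num [Finset.sum_range_succ, Nat.factorial] at h₁ h₂
  rw [firstMoment_eq_of_ne_zero (by norm_num)]
  exact div_nonneg (by linarith) (by norm_num)

theorem firstMoment_053_nonpos : firstMoment 0.53 ≤ 0 := by
  have h₁ := abs_le.1 (abs_exp_sub_taylor_eight_le (x := 0.53) (by norm_num [abs_le]))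
  have h₂ := abs_le.1 (abs_exp_sub_taylor_eight_le (x := -0.53) (by norm_num [abs_le]))
  norm_num [Finset.sum_range_succ, Nat.factorial] at h₁ h₂
  rw [firstMoment_eq_of_ne_zero (by norm_num)]
  exact div_nonpos_of_nonpos_of_nonneg (by linarith) (by norm_num)

theorem H_052_bounds :
    3.82645 ≤ H 0.52 - 0.01 * firstMoment 0.52 ∧ H 0.52 ≤ 3.8266 := by
  have h₁ := abs_le.1 (abs_exp_sub_taylor_eight_le (x := 0.52) (by norm_num [abs_le]))
  have h₂ := abs_le.1 (abs_exp_sub_taylor_eight_le (x := -0.52) (by norm_num [abs_le]))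
  norm_num [Finset.sum_range_succ, Nat.factorial] at h₁ h₂
  rw [H_eq_of_ne_zero (by norm_num), firstMoment_eq_of_ne_zero (by norm_num)]
  constructor
  · norm_num
    linarith
  · rw [div_le_iff₀ (by norm_num)]
    linarith

theorem abs_div_exp_two_sub_lt {h : ℝ} (hlo : 3.82645 ≤ h) (hhi : h ≤ 3.8266) :
    |h / exp 2 - 0.5179| < 5e-5 := by
  have he : exp 2 = exp 1 ^ 2 := by rw [← exp_nat_mul]; norm_num
  have he₁ := exp_one_gt_d9
  have he₂ := exp_one_lt_d9
  have hlo₂ : 7.389 < exp 2 := by rw [he]; nlinarith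
  have hhi₂ : exp 2 < 7.3891 := by rw [he]; nlinarith
  rw [abs_sub_lt_iff, sub_lt_iff_lt_add, sub_lt_comm, div_lt_iff₀ (by positivity),
    lt_div_iff₀ (by positivity)]
  constructor <;> nlinarith

/-- The Gaussian density `Θ = (min H)/e²` of the Koiso–Cao soliton equals `0.5179`
to four decimal places. -/
theorem stmt_12 :
    ∃ cs : ℝ, (∀ c : ℝ, H cs ≤ H c) ∧
      |H cs / Real.exp 2 - 0.5179| < 5e-5 := by
  obtain ⟨cs, ⟨hcs₁, hcs₂⟩, hcs⟩ : ∃ cs ∈ Icc (0.52 : ℝ) 0.53, firstMoment cs = 0 :=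
    intermediate_value_Icc' (by norm_num) continuous_firstMoment.continuousOn
      ⟨firstMoment_053_nonpos, zero_le_firstMoment_052⟩
  have hmin : ∀ c, H cs ≤ H c := fun c => by
    simpa [hcs] using H_sub_mul_firstMoment_le cs c
  refine ⟨cs, hmin, abs_div_exp_two_sub_lt ?_ ((hmin 0.52).trans H_052_bounds.2)⟩
  calc (3.82645 : ℝ) ≤ H 0.52 - 0.01 * firstMoment 0.52 := H_052_bounds.1
    _ ≤ H 0.52 - (cs - 0.52) * firstMoment 0.52 := by
        nlinarith [zero_le_firstMoment_052]
    _ ≤ H cs := H_sub_mul_firstMoment_le _ _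
end
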